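/- arXiv:1912.12851 — 8 statements merged into one kernel-verified Lean document; each statement's English description precedes it below -/
import Mathlib

section
/- Let d ∈ ℕ with d ≥ 1 and γ > 0. There exists a constant C > 0 such that for every y > 0 and every multi-index α ∈ ℕ^d, exp(-y^(-2/γ)) / y^|α| ≤ C · (α!)^γ, where |α| = α₁ + ⋯ + α_d and α! = α₁! ⋯ α_d!. -/
open Real Finset
open scoped Nat

/-!
Put `t = y ^ (-2 / γ)` and `n = |α|`, so that `y ^ (-n) = t ^ s` with `s = n γ / 2`. Since
`exp (-t) t ^ s ≤ s ^ s = ((n γ / 2) ^ n) ^ (γ / 2)`, it suffices to bound `(n γ / 2) ^ n` by a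
constant times `(α!) ^ 2`. The exponential series gives `n ^ n ≤ e ^ n n!`, the multinomial
theorem gives `n! ≤ d ^ n α!`, and the remaining geometric factor `K ^ n` is absorbed by
`K ^ n ≤ exp (K d) α!`, from the exponential series applied coordinatewise.
-/

theorem Nat.multinomial_univ_le_card_pow {ι : Type*} [Fintype ι] [DecidableEq ι] (α : ι → ℕ) :
    Nat.multinomial univ α ≤ Fintype.card ι ^ ∑ i, α i := by
  have hsum := sum_pow_eq_sum_piAntidiag (univ : Finset ι) (fun _ ↦ (1 : ℕ)) (∑ i, α i)
  simp only [sum_const, smul_eq_mul, mul_one, one_pow, prod_const_one] at hsum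
  rw [← Finset.card_univ, hsum]
  exact single_le_sum (fun _ _ ↦ Nat.zero_le _) (by simp)

theorem Nat.factorial_sum_le_card_pow_mul_prod_factorial {ι : Type*} [Fintype ι] (α : ι → ℕ) :
    (∑ i, α i)! ≤ Fintype.card ι ^ (∑ i, α i) * ∏ i, (α i)! := by
  classical
  rw [← Nat.multinomial_spec, mul_comm]
  gcongr
  exact Nat.multinomial_univ_le_card_pow α

theorem Real.pow_le_exp_mul_factorial {x : ℝ} (hx : 0 ≤ x) (n : ℕ) : x ^ n ≤ exp x * n ! := by
  have := pow_div_factorial_le_exp x hx n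
  rwa [div_le_iff₀ (by positivity)] at this

theorem Real.pow_sum_le_exp_mul_prod_factorial {ι : Type*} [Fintype ι] {K : ℝ} (hK : 0 ≤ K)
    (α : ι → ℕ) : K ^ (∑ i, α i) ≤ exp (K * Fintype.card ι) * ∏ i, ((α i)! : ℝ) := by
  calc K ^ (∑ i, α i) = ∏ i, K ^ α i := (prod_pow_eq_pow_sum _ _ _).symm
    _ ≤ ∏ i, (exp K * (α i)!) := prod_le_prod (fun _ _ ↦ by positivity)
        fun i _ ↦ pow_le_exp_mul_factorial hK (α i)
    _ = exp (K * Fintype.card ι) * ∏ i, ((α i)! : ℝ) := by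
        rw [prod_mul_distrib, prod_const, card_univ, ← exp_nat_mul, mul_comm K]

theorem Real.exp_neg_mul_rpow_le {t s : ℝ} (ht : 0 < t) (hs : 0 ≤ s) :
    exp (-t) * t ^ s ≤ s ^ s := by
  rcases hs.eq_or_lt with rfl | hs
  · simpa using exp_le_one_iff.2 (neg_nonpos.2 ht.le)
  -- `x + 1 ≤ exp x` at `x = t / s - 1`; equality at `t = s`, where `exp (-t) * t ^ s` is maximal
  have hts : t ≤ s * exp (t / s - 1) := by
    have := add_one_le_exp (t / s - 1)
    rw [sub_add_cancel, div_le_iff₀ hs] at this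
    linarith
  calc exp (-t) * t ^ s ≤ exp (-t) * (s * exp (t / s - 1)) ^ s := by gcongr
    _ = s ^ s * exp (-s) := by
        rw [mul_rpow hs.le (exp_pos _).le, ← exp_mul, mul_left_comm, ← exp_add]
        congr 2
        field_simp
        ring
    _ ≤ s ^ s := mul_le_of_le_one_right (by positivity) (exp_le_one_iff.2 (by linarith))

theorem Real.sum_mul_pow_sum_le_exp_mul_sq_prod_factorial {ι : Type*} [Fintype ι] {c : ℝ}
    (hc : 0 ≤ c) (α : ι → ℕ) :
    ((∑ i, α i : ℕ) * c) ^ (∑ i, α i) ≤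
      exp (exp 1 * c * Fintype.card ι * Fintype.card ι) * (∏ i, ((α i)! : ℝ)) ^ 2 := by
  set n := ∑ i, α i
  set d : ℝ := (Fintype.card ι : ℝ)
  set P := ∏ i, ((α i)! : ℝ)
  have hfact : ((n ! : ℕ) : ℝ) ≤ d ^ n * P := by
    simpa [d, P] using
      (Nat.cast_le (α := ℝ)).2 (Nat.factorial_sum_le_card_pow_mul_prod_factorial α)
  calc ((n : ℝ) * c) ^ n = (n : ℝ) ^ n * c ^ n := mul_pow _ _ _
    _ ≤ exp n * n ! * c ^ n := by gcongr; exact pow_le_exp_mul_factorial n.cast_nonneg n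
    _ ≤ exp 1 ^ n * (d ^ n * P) * c ^ n := by rw [exp_one_pow]; gcongr
    _ = (exp 1 * c * d) ^ n * P := by ring
    _ ≤ exp (exp 1 * c * d * d) * P * P := by
        gcongr
        exact pow_sum_le_exp_mul_prod_factorial (by positivity) α
    _ = exp (exp 1 * c * d * d) * P ^ 2 := by ring

theorem stmt_0_general (d : ℕ) (γ : ℝ) (hγ : 0 < γ) :
    ∃ C : ℝ, 0 < C ∧ ∀ y : ℝ, 0 < y → ∀ α : Fin d → ℕ,
      Real.exp (-y ^ (-(2 / γ))) / y ^ (∑ i, α i) ≤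
        C * ((∏ i, Nat.factorial (α i) : ℕ) : ℝ) ^ γ := by
  set K := exp (exp 1 * (γ / 2) * d * d)
  refine ⟨K ^ (γ / 2), by positivity, fun y hy α ↦ ?_⟩
  set n := ∑ i, α i
  have hn : (0 : ℝ) ≤ n * (γ / 2) := by positivity
  have hbound := sum_mul_pow_sum_le_exp_mul_sq_prod_factorial (by positivity : 0 ≤ γ / 2) α
  simp only [Fintype.card_fin] at hbound
  calc exp (-y ^ (-(2 / γ))) / y ^ n
        = exp (-y ^ (-(2 / γ))) * (y ^ (-(2 / γ))) ^ (n * (γ / 2)) := by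
        rw [div_eq_mul_inv, ← rpow_natCast, ← rpow_neg hy.le, ← rpow_mul hy.le]
        congr 2
        field_simp
    _ ≤ (n * (γ / 2)) ^ (n * (γ / 2)) := exp_neg_mul_rpow_le (rpow_pos_of_pos hy _) hn
    _ = ((n * (γ / 2)) ^ n) ^ (γ / 2) := by
        rw [← rpow_natCast, ← rpow_mul hn, mul_comm (n : ℝ) (γ / 2)]
    _ ≤ (K * (∏ i, ((α i)! : ℝ)) ^ 2) ^ (γ / 2) := by gcongr
    _ = K ^ (γ / 2) * ((∏ i, (α i)! : ℕ) : ℝ) ^ γ := by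
        rw [mul_rpow (by positivity) (by positivity), ← rpow_natCast, ← rpow_mul (by positivity)]
        push_cast
        ring_nf

theorem stmt_0 (d : ℕ) (hd : 1 ≤ d) (γ : ℝ) (hγ : 0 < γ) :
    ∃ C : ℝ, 0 < C ∧ ∀ y : ℝ, 0 < y → ∀ α : Fin d → ℕ,
      Real.exp (-y ^ (-(2 / γ))) / y ^ (∑ i, α i) ≤
        C * ((∏ i, Nat.factorial (α i) : ℕ) : ℝ) ^ γ :=
  stmt_0_general d γ hγ
end

section
/- Fix k ∈ ℕ with k ≥ 1, d ≥ 1 and γ > 0, and define f_k : ℝ₊ → ℝ by f_k(y) = (1/y^k)·exp(-y^(-2/γ)/d). Then there exists a constant M > 0 depending only on d and γ (not on k) such that f_k(y) ≤ M · (k!)^γ for all y > 0 and all k ≥ 1. -/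
open Real

/-- Key Stirling-type bound: `k * log k - k ≤ log k!`. -/
lemma log_factorial_lower (k : ℕ) (hk : 1 ≤ k) :
    (k : ℝ) * Real.log k - k ≤ Real.log (Nat.factorial k) := by
  have hk0 : (0 : ℝ) < k := by exact_mod_cast hk
  have hf : (0 : ℝ) < (Nat.factorial k : ℝ) := by exact_mod_cast Nat.factorial_pos k
  have h := Real.pow_div_factorial_le_exp (x := (k : ℝ)) hk0.le k
  have hpow : (0 : ℝ) < (k : ℝ) ^ k / (Nat.factorial k : ℝ) := by positivity
  have hlog := Real.log_le_log hpow h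
  rw [Real.log_exp, Real.log_div (by positivity) hf.ne', Real.log_pow] at hlog
  linarith

theorem stmt_1 (d : ℕ) (hd : 1 ≤ d) (γ : ℝ) (hγ : 0 < γ) :
    ∃ M : ℝ, 0 < M ∧ ∀ k : ℕ, 1 ≤ k → ∀ y : ℝ, 0 < y →
      (1 / y ^ k) * Real.exp (-y ^ (-(2 / γ)) / d) ≤ M * (Nat.factorial k : ℝ) ^ γ := by
  have hd0 : (0 : ℝ) < d := by exact_mod_cast hd
  set C : ℝ := d * γ * Real.exp 1 / 2 with hCdef
  have hC0 : 0 < C := by positivity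
  refine ⟨Real.exp (C * γ / 2), Real.exp_pos _, ?_⟩
  intro k hk y hy
  have hk0 : (0 : ℝ) < k := by exact_mod_cast hk
  set a : ℝ := k * γ / 2 with hadef
  have ha0 : 0 < a := by positivity
  set t : ℝ := y ^ (-(2 / γ)) with htdef
  have ht0 : 0 < t := Real.rpow_pos_of_pos hy _
  -- Rewrite LHS as an exponential
  have hA : 1 / y ^ k = Real.exp (a * Real.log t) := by
    rw [htdef, Real.log_rpow hy]
    have h1 : a * (-(2 / γ) * Real.log y) = Real.log y * (-(k : ℝ)) := by
      field_simp [hadef]; ring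
    rw [h1, ← Real.rpow_def_of_pos hy, Real.rpow_neg hy.le, Real.rpow_natCast, one_div]
  have hLHS : (1 / y ^ k) * Real.exp (-t / d) = Real.exp (a * Real.log t - t / d) := by
    rw [hA, ← Real.exp_add]; ring_nf
  -- Step B: maximize over t
  have hB : a * Real.log t - t / d ≤ a * Real.log (a * d) - a := by
    have had : 0 < a * d := by positivity
    have h1 : Real.log (t / (a * d)) ≤ t / (a * d) - 1 :=
      Real.log_le_sub_one_of_pos (by positivity)
    rw [Real.log_div ht0.ne' had.ne'] at h1
    have h2 := mul_le_mul_of_nonneg_left h1 ha0.le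
    have h3 : a * (t / (a * d) - 1) = t / d - a := by field_simp
    nlinarith
  -- Key inequality: k * (log C - log k) ≤ C
  have hkey : (k : ℝ) * (Real.log C - Real.log k) ≤ C := by
    have h1 : Real.log (C / k) ≤ C / k - 1 :=
      Real.log_le_sub_one_of_pos (by positivity)
    rw [Real.log_div hC0.ne' hk0.ne'] at h1
    have h2 := mul_le_mul_of_nonneg_left h1 hk0.le
    have h3 : (k : ℝ) * (C / k - 1) = C - ↑k := by field_simp
    nlinarith
  -- Step C : a * log (a*d) - a ≤ C*γ/2 + γ*(k*log k - k)
  have hC' : a * Real.log (a * d) - a ≤ C * γ / 2 + γ * ((k : ℝ) * Real.log k - k) := by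
    have hlogC : Real.log C = Real.log (γ / 2) + Real.log d + 1 := by
      have : C = (γ / 2) * d * Real.exp 1 := by rw [hCdef]; ring
      rw [this, Real.log_mul (by positivity) (Real.exp_pos 1).ne',
        Real.log_mul (by positivity) hd0.ne', Real.log_exp]
    have hlogad : Real.log (a * d) = Real.log k + Real.log (γ / 2) + Real.log d := by
      have : a * d = (k : ℝ) * ((γ / 2) * d) := by rw [hadef]; ring
      rw [this, Real.log_mul hk0.ne' (by positivity),
        Real.log_mul (by positivity) hd0.ne']
      ring
    rw [hlogad, hadef]
    nlinarith [mul_le_mul_of_nonneg_left hkey (le_of_lt (by positivity : (0:ℝ) < γ / 2))]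
  -- Step D : exp(γ*(k log k - k)) ≤ (k!)^γ
  have hf : (0 : ℝ) < (Nat.factorial k : ℝ) := by exact_mod_cast Nat.factorial_pos k
  have hD : Real.exp (γ * ((k : ℝ) * Real.log k - k)) ≤ (Nat.factorial k : ℝ) ^ γ := by
    rw [Real.rpow_def_of_pos hf, Real.exp_le_exp]
    have := log_factorial_lower k hk
    nlinarith
  calc (1 / y ^ k) * Real.exp (-y ^ (-(2 / γ)) / d)
      = Real.exp (a * Real.log t - t / d) := hLHS
    _ ≤ Real.exp (C * γ / 2 + γ * ((k : ℝ) * Real.log k - k)) := by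
        rw [Real.exp_le_exp]; linarith
    _ = Real.exp (C * γ / 2) * Real.exp (γ * ((k : ℝ) * Real.log k - k)) := by
        rw [← Real.exp_add]
    _ ≤ Real.exp (C * γ / 2) * (Nat.factorial k : ℝ) ^ γ := by
        exact mul_le_mul_of_nonneg_left hD (Real.exp_pos _).le
end

section
/- Let n ∈ ℕ with n ≥ 1 and let I ⊊ 𝕋 = ℝ/2πℤ be an arc (interval) of the circle with arclength |I| > 1/n. Then there exists k ∈ ℤ² with max(|k₁|,|k₂|) = n such that the unit vector k/‖k‖₂ lies in I (viewing I as a set of unit vectors via the angle parametrization). -/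
/-!
Rotation by `π/2` maps `(k₁, k₂)` to `(-k₂, k₁)` and preserves `|k|_max`, so the set of angles of
the vectors with `|k|_max = n` is `π/2`-periodic and we may move `a` into `[-π/4, π/4]`. There
`j = ⌈n tan a⌉` satisfies `|j| ≤ n` since `|tan a| ≤ 1`, and the angle `arctan (j/n)` of `(n, j)`
lies in `[a, a + 1/n]` because `arctan` is `1`-Lipschitz.
-/

open Real

def IsDirectionAngle (k : ℤ × ℤ) (θ : ℝ) : Prop :=
  Real.cos θ = (k.1 : ℝ) / Real.sqrt ((k.1 : ℝ) ^ 2 + (k.2 : ℝ) ^ 2) ∧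
    Real.sin θ = (k.2 : ℝ) / Real.sqrt ((k.1 : ℝ) ^ 2 + (k.2 : ℝ) ^ 2)

def maxNormDirectionAngles (n : ℕ) : Set ℝ :=
  {θ | ∃ k : ℤ × ℤ, max |k.1| |k.2| = (n : ℤ) ∧ IsDirectionAngle k θ}

namespace IsDirectionAngle

variable {k : ℤ × ℤ} {θ : ℝ}

theorem add_pi_div_two (h : IsDirectionAngle k θ) : IsDirectionAngle (-k.2, k.1) (θ + π / 2) := by
  obtain ⟨hc, hs⟩ := h
  have hnorm : ((-k.2 : ℤ) : ℝ) ^ 2 + (k.1 : ℝ) ^ 2 = (k.1 : ℝ) ^ 2 + (k.2 : ℝ) ^ 2 := by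
    push_cast; ring
  constructor
  · rw [hnorm, cos_add_pi_div_two, hs, Int.cast_neg, neg_div]
  · rw [hnorm, sin_add_pi_div_two, hc]

theorem sub_pi_div_two (h : IsDirectionAngle k θ) : IsDirectionAngle (k.2, -k.1) (θ - π / 2) := by
  obtain ⟨hc, hs⟩ := h
  have hnorm : (k.2 : ℝ) ^ 2 + ((-k.1 : ℤ) : ℝ) ^ 2 = (k.1 : ℝ) ^ 2 + (k.2 : ℝ) ^ 2 := by
    push_cast; ring
  constructor
  · rw [hnorm, cos_sub_pi_div_two, hs]
  · rw [hnorm, sin_sub_pi_div_two, hc, Int.cast_neg, neg_div]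

end IsDirectionAngle

theorem isDirectionAngle_arctan_div {p : ℤ} (hp : 0 < p) (q : ℤ) :
    IsDirectionAngle (p, q) (arctan (q / p)) := by
  have hp' : (0 : ℝ) < p := by exact_mod_cast hp
  have hnorm : √((p : ℝ) ^ 2 + (q : ℝ) ^ 2) = p * √(1 + ((q : ℝ) / p) ^ 2) := by
    rw [← sqrt_sq hp'.le, ← sqrt_mul (sq_nonneg _), sqrt_sq hp'.le]
    congr 1
    field_simp
  have hpos : 0 < √(1 + ((q : ℝ) / p) ^ 2) := sqrt_pos.2 (by positivity)
  refine ⟨?_, ?_⟩ <;> simp only [cos_arctan, sin_arctan, hnorm] <;> field_simp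

theorem maxNormDirectionAngles_periodic (n : ℕ) :
    Function.Periodic (· ∈ maxNormDirectionAngles n) (π / 2) := by
  intro θ
  refine propext ⟨fun ⟨k, hk, hθ⟩ => ⟨(k.2, -k.1), ?_, by simpa using hθ.sub_pi_div_two⟩,
    fun ⟨k, hk, hθ⟩ => ⟨(-k.2, k.1), ?_, hθ.add_pi_div_two⟩⟩ <;>
  simpa [max_comm] using hk

theorem lipschitzWith_arctan : LipschitzWith 1 arctan := by
  refine lipschitzWith_of_nnnorm_deriv_le differentiable_arctan fun x => ?_
  rw [← NNReal.coe_le_coe, coe_nnnorm, Real.deriv_arctan, NNReal.coe_one, norm_div, norm_one,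
    Real.norm_of_nonneg (by positivity)]
  exact div_le_one_of_le₀ (by nlinarith [sq_nonneg x]) (by positivity)

theorem abs_tan_le_one {a : ℝ} (ha : |a| ≤ π / 4) : |tan a| ≤ 1 := by
  obtain ⟨ha₁, ha₂⟩ := abs_le.1 ha
  have harctan : arctan (tan a) = a := arctan_tan (by linarith [pi_pos]) (by linarith [pi_pos])
  refine abs_le.2 ⟨?_, ?_⟩ <;> refine arctan_strictMono.le_iff_le.1 ?_
  · rwa [arctan_neg, arctan_one, harctan]
  · rwa [arctan_one, harctan]

theorem exists_mem_Icc_maxNormDirectionAngles {n : ℕ} (hn : 1 ≤ n) {a : ℝ} (ha : |a| ≤ π / 4) :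
    ∃ θ ∈ Set.Icc a (a + 1 / n), θ ∈ maxNormDirectionAngles n := by
  have hn' : (0 : ℝ) < n := by exact_mod_cast hn
  obtain ⟨htan₁, htan₂⟩ := abs_le.1 (abs_tan_le_one ha)
  have harctan : arctan (tan a) = a := by
    obtain ⟨ha₁, ha₂⟩ := abs_le.1 ha
    exact arctan_tan (by linarith [pi_pos]) (by linarith [pi_pos])
  set j : ℤ := ⌈(n : ℝ) * tan a⌉
  have hj_ge : tan a ≤ j / n := by
    rw [le_div_iff₀ hn', mul_comm]
    exact Int.le_ceil _
  have hj_lt : (j : ℝ) / n < tan a + 1 / n := by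
    rw [div_lt_iff₀ hn', add_mul, one_div_mul_cancel hn'.ne', mul_comm]
    exact Int.ceil_lt_add_one _
  have hj_abs : |j| ≤ (n : ℤ) := by
    refine abs_le.2 ⟨?_, Int.ceil_le.2 (by push_cast; nlinarith)⟩
    exact_mod_cast (show (-(n : ℝ)) ≤ j by nlinarith [Int.le_ceil ((n : ℝ) * tan a)])
  have hdir := isDirectionAngle_arctan_div (Int.natCast_pos.2 hn) j
  rw [Int.cast_natCast] at hdir
  refine ⟨arctan (j / n), ⟨?_, ?_⟩, ((n : ℤ), j), ?_, hdir⟩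
  · exact harctan ▸ arctan_strictMono.monotone hj_ge
  · have hlip := lipschitzWith_arctan.dist_le_mul (j / n) (tan a)
    rw [NNReal.coe_one, one_mul, dist_eq, dist_eq, harctan] at hlip
    linarith [le_abs_self (arctan (j / n) - a), abs_of_nonneg (sub_nonneg.2 hj_ge)]
  · rw [abs_of_nonneg (Int.natCast_nonneg n)]
    exact max_eq_left hj_abs

theorem exists_abs_sub_int_mul_le (a : ℝ) {c : ℝ} (hc : 0 < c) : ∃ m : ℤ, |a - m * c| ≤ c / 2 := by
  refine ⟨round (a / c), ?_⟩
  have h : a - round (a / c) * c = (a / c - round (a / c)) * c := by field_simp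
  rw [h, abs_mul, abs_of_pos hc]
  nlinarith [abs_sub_round (a / c)]

theorem stmt_2_general (n : ℕ) (hn : 1 ≤ n) (a b : ℝ) (hab : b - a > 1 / n) :
    ∃ k : ℤ × ℤ, max |k.1| |k.2| = (n : ℤ) ∧
      ∃ θ ∈ Set.Icc a b,
        Real.cos θ = (k.1 : ℝ) / Real.sqrt ((k.1 : ℝ) ^ 2 + (k.2 : ℝ) ^ 2) ∧
        Real.sin θ = (k.2 : ℝ) / Real.sqrt ((k.1 : ℝ) ^ 2 + (k.2 : ℝ) ^ 2) := by
  obtain ⟨m, hm⟩ := exists_abs_sub_int_mul_le a (c := π / 2) (by positivity)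
  obtain ⟨θ, ⟨hθa, hθb⟩, hθ⟩ :=
    exists_mem_Icc_maxNormDirectionAngles hn (hm.trans_eq (by ring))
  have hshift := (maxNormDirectionAngles_periodic n).int_mul m θ
  obtain ⟨k, hk, hkθ⟩ : θ + m * (π / 2) ∈ maxNormDirectionAngles n := hshift ▸ hθ
  exact ⟨k, hk, θ + m * (π / 2), ⟨by linarith, by linarith⟩, hkθ⟩

/-- any arc of the circle of length greater than `1/n` (and shorter than the
full circle) contains the direction `k/‖k‖₂` of an integer vector `k` with `|k|_max = n`. -/
theorem stmt_2 (n : ℕ) (hn : 1 ≤ n) (a b : ℝ) (hab : b - a > 1 / n) (hlt : b - a < 2 * π) :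
    ∃ k : ℤ × ℤ, max |k.1| |k.2| = (n : ℤ) ∧
      ∃ θ ∈ Set.Icc a b,
        Real.cos θ = (k.1 : ℝ) / Real.sqrt ((k.1 : ℝ) ^ 2 + (k.2 : ℝ) ^ 2) ∧
        Real.sin θ = (k.2 : ℝ) / Real.sqrt ((k.1 : ℝ) ^ 2 + (k.2 : ℝ) ^ 2) :=
  stmt_2_general n hn a b hab
end

section
/- Let v : J = (-1,1) → ℝ² be analytic with v₂(t) ≠ 0 and v₁'(t)v₂(t) ≠ v₁(t)v₂'(t) for all t ∈ J, and set φ(t) = v₁(t)/v₂(t). Suppose 0 < |φ'(t)| < β for all t ∈ J, and let δ = 1/β. Then the map φ̂ : (-δ,δ) × J → ℝ², φ̂(x,y) = (x, y - x·φ(y)), is injective and has invertible derivative at every point; hence it is an analytic diffeomorphism onto its image. -/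
/-!
The derivative of `(x, y) ↦ (x, y - x φ(y))` is triangular with determinant `1 - x φ'(y)`, and
`|x φ'(y)| < δ β = 1` keeps it positive. The same bound makes each slice `y ↦ y - x φ(y)`
strictly increasing on the interval `J`; as the first coordinate is preserved, the map is injective.
-/

open Set

def shear (f : ℝ → ℝ) (p : ℝ × ℝ) : ℝ × ℝ := (p.1, p.2 - p.1 * f p.2)

lemma one_sub_mul_pos_of_abs_lt {x a β : ℝ} (hx : |x| < 1 / β) (ha : |a| < β) :
    0 < 1 - x * a := by
  have hβ : 0 < β := (abs_nonneg a).trans_lt ha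
  have : |x * a| < 1 :=
    calc |x * a| = |x| * |a| := abs_mul x a
      _ ≤ |x| * β := mul_le_mul_of_nonneg_left ha.le (abs_nonneg x)
      _ < 1 / β * β := mul_lt_mul_of_pos_right hx hβ
      _ = 1 := one_div_mul_cancel hβ.ne'
  linarith [le_abs_self (x * a)]

lemma strictMonoOn_sub_mul_of_abs_deriv_lt {f : ℝ → ℝ} {D : Set ℝ} {x β : ℝ}
    (hD : Convex ℝ D) (hDo : IsOpen D) (hf : DifferentiableOn ℝ f D)
    (hf' : ∀ t ∈ D, |deriv f t| < β) (hx : |x| < 1 / β) :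
    StrictMonoOn (fun y => y - x * f y) D := by
  refine strictMonoOn_of_deriv_pos hD (continuousOn_id.sub (hf.continuousOn.const_smul x))
    fun t ht => ?_
  rw [hDo.interior_eq] at ht
  have hft : HasDerivAt f (deriv f t) t := (hf.differentiableAt (hDo.mem_nhds ht)).hasDerivAt
  have hslice : HasDerivAt (fun y => y - x * f y) (1 - x * deriv f t) t :=
    (hasDerivAt_id' t).sub (hft.const_mul x)
  rw [hslice.deriv]
  exact one_sub_mul_pos_of_abs_lt hx (hf' t ht)

lemma injOn_shear {f : ℝ → ℝ} {S D : Set ℝ}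
    (hinj : ∀ x ∈ S, InjOn (fun y => y - x * f y) D) : InjOn (shear f) (S ×ˢ D) := by
  rintro ⟨x, y⟩ ⟨hx, hy⟩ ⟨x', y'⟩ ⟨-, hy'⟩ h
  obtain ⟨rfl, hxy⟩ := Prod.mk.inj h
  exact congrArg _ (hinj x hx hy hy' hxy)

lemma analyticOnNhd_shear {f : ℝ → ℝ} {S D : Set ℝ} (hf : AnalyticOnNhd ℝ f D) :
    AnalyticOnNhd ℝ (shear f) (S ×ˢ D) := fun p hp =>
  analyticAt_fst.prod (analyticAt_snd.sub (analyticAt_fst.mul ((hf p.2 hp.2).comp analyticAt_snd)))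

theorem stmt_3_general (v₁ v₂ : ℝ → ℝ) (β : ℝ)
    (J : Set ℝ) (hJ : J = Ioo (-1 : ℝ) 1)
    (hv₁ : AnalyticOnNhd ℝ v₁ J) (hv₂ : AnalyticOnNhd ℝ v₂ J)
    (hv₂0 : ∀ t ∈ J, v₂ t ≠ 0)
    (φ : ℝ → ℝ) (hφ : ∀ t ∈ J, φ t = v₁ t / v₂ t)
    (hφ' : ∀ t ∈ J, 0 < |deriv φ t| ∧ |deriv φ t| < β)
    (δ : ℝ) (hδ : δ = 1 / β) :
    Set.InjOn (fun p : ℝ × ℝ => (p.1, p.2 - p.1 * φ p.2)) (Ioo (-δ) δ ×ˢ J) ∧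
    (∀ p ∈ Ioo (-δ) δ ×ˢ J, 1 - p.1 * deriv φ p.2 ≠ 0) ∧
    AnalyticOnNhd ℝ (fun p : ℝ × ℝ => (p.1, p.2 - p.1 * φ p.2)) (Ioo (-δ) δ ×ˢ J) := by
  subst hJ hδ
  have hφa : AnalyticOnNhd ℝ φ (Ioo (-1) 1) :=
    (hv₁.div hv₂ hv₂0).congr isOpen_Ioo fun t ht => (hφ t ht).symm
  have hφβ : ∀ t ∈ Ioo (-1 : ℝ) 1, |deriv φ t| < β := fun t ht => (hφ' t ht).2
  refine ⟨injOn_shear fun x hx => ?_, fun p hp => ?_, analyticOnNhd_shear hφa⟩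
  · exact (strictMonoOn_sub_mul_of_abs_deriv_lt (convex_Ioo _ _) isOpen_Ioo
      hφa.differentiableOn hφβ (abs_lt.2 hx)).injOn
  · exact (one_sub_mul_pos_of_abs_lt (abs_lt.2 hp.1) (hφβ p.2 hp.2)).ne'

/-- the shear map `(x,y) ↦ (x, y - x·φ(y))` associated to an analytic
nonvanishing curve `v = (v₁, v₂)` with `0 < |φ'| < β`, `φ = v₁/v₂`, is injective on
`(-δ,δ) × J` with everywhere invertible derivative (determinant `1 - x·φ'(y) ≠ 0`),
where `δ = 1/β`; moreover it is analytic, hence an analytic diffeomorphism onto its image. -/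
theorem stmt_3 (v₁ v₂ : ℝ → ℝ) (β : ℝ) (hβ : 0 < β)
    (J : Set ℝ) (hJ : J = Ioo (-1 : ℝ) 1)
    (hv₁ : AnalyticOnNhd ℝ v₁ J) (hv₂ : AnalyticOnNhd ℝ v₂ J)
    (hv₂0 : ∀ t ∈ J, v₂ t ≠ 0)
    (hnd : ∀ t ∈ J, deriv v₁ t * v₂ t ≠ v₁ t * deriv v₂ t)
    (φ : ℝ → ℝ) (hφ : ∀ t ∈ J, φ t = v₁ t / v₂ t)
    (hφ' : ∀ t ∈ J, 0 < |deriv φ t| ∧ |deriv φ t| < β)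
    (δ : ℝ) (hδ : δ = 1 / β) :
    Set.InjOn (fun p : ℝ × ℝ => (p.1, p.2 - p.1 * φ p.2)) (Ioo (-δ) δ ×ˢ J) ∧
    (∀ p ∈ Ioo (-δ) δ ×ˢ J, 1 - p.1 * deriv φ p.2 ≠ 0) ∧
    AnalyticOnNhd ℝ (fun p : ℝ × ℝ => (p.1, p.2 - p.1 * φ p.2)) (Ioo (-δ) δ ×ˢ J) :=
  stmt_3_general v₁ v₂ β J hJ hv₁ hv₂ hv₂0 φ hφ hφ' δ hδ
end

section
/- Let k ∈ ℤ² ∖ {0}, ε ≠ 0, and H_ε(θ,R) = ⟨k,R⟩ + ε cos(⟨θ,k^⊥⟩) on 𝕋² × ℝ². If θ₀ ∈ 𝕋² satisfies sin(⟨θ₀, k^⊥⟩) = 1, then for any R₀ ∈ ℝ² the curve t ↦ (θ₀ + tk, R₀ + tε k^⊥) is a solution of the Hamiltonian system of H_ε, and its action component R₀ + tε k^⊥ is unbounded as t → ∞. -/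
/-!
Since `⟨k, k^⊥⟩ = 0`, the angle `⟨θ, k^⊥⟩` on which `H_ε` depends is constant along
`θ₀ + t k`, so `sin ⟨θ, k^⊥⟩ = 1` persists and `Ṙ = -∂_θ H_ε = ε sin ⟨θ, k^⊥⟩ k^⊥ = ε k^⊥`.
The action therefore drifts along the nonzero vector `ε k^⊥` and leaves every ball.
-/

open Real

noncomputable def resonantHamiltonian (a b ε : ℝ) (θ R : ℝ × ℝ) : ℝ :=
  (a * R.1 + b * R.2) + ε * cos (θ.1 * -b + θ.2 * a)

section
variable (a b ε : ℝ)

theorem deriv_resonantHamiltonian_action_fst (θ : ℝ × ℝ) (y x : ℝ) :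
    deriv (fun r => resonantHamiltonian a b ε θ (r, y)) x = a := by
  simp [resonantHamiltonian]

theorem deriv_resonantHamiltonian_action_snd (θ : ℝ × ℝ) (y x : ℝ) :
    deriv (fun r => resonantHamiltonian a b ε θ (y, r)) x = b := by
  simp [resonantHamiltonian]

theorem deriv_resonantHamiltonian_angle_fst (R : ℝ × ℝ) (y x : ℝ) :
    deriv (fun u => resonantHamiltonian a b ε (u, y) R) x = ε * b * sin (x * -b + y * a) := by
  simp [resonantHamiltonian]; ring

theorem deriv_resonantHamiltonian_angle_snd (R : ℝ × ℝ) (y x : ℝ) :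
    deriv (fun u => resonantHamiltonian a b ε (y, u) R) x = -(ε * a * sin (y * -b + x * a)) := by
  simp [resonantHamiltonian]; ring

end

theorem pairing_perp_add_mul_self (a b x y t : ℝ) :
    (x + t * a) * -b + (y + t * b) * a = x * -b + y * a := by
  ring

theorem exists_lt_norm_add_smul {E : Type*} [NormedAddCommGroup E] [NormedSpace ℝ E]
    (x : E) {v : E} (hv : v ≠ 0) (A : ℝ) : ∃ t : ℝ, A < ‖x + t • v‖ := by
  have hv' : 0 < ‖v‖ := norm_pos_iff.mpr hv
  refine ⟨(|A| + ‖x‖ + 1) / ‖v‖, ?_⟩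
  have hscale : ‖((|A| + ‖x‖ + 1) / ‖v‖) • v‖ = |A| + ‖x‖ + 1 := by
    rw [norm_smul, Real.norm_of_nonneg (by positivity), div_mul_cancel₀ _ hv'.ne']
  have := norm_sub_le (x + ((|A| + ‖x‖ + 1) / ‖v‖) • v) x
  rw [add_sub_cancel_left, hscale] at this
  linarith [le_abs_self A]

theorem perp_ne_zero {k : ℤ × ℤ} (hk : k ≠ 0) : (-(k.2 : ℝ), (k.1 : ℝ)) ≠ 0 := by
  intro h
  simp only [Prod.mk_eq_zero, neg_eq_zero, Int.cast_eq_zero] at h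
  exact hk (Prod.ext h.2 h.1)

/-- if `sin(⟨θ₀,k⊥⟩) = 1` then `t ↦ (θ₀ + tk, R₀ + tε k⊥)` is a solution of the
Hamiltonian system of `H_ε(θ,R) = ⟨k,R⟩ + ε cos(⟨θ,k⊥⟩)` and its action component is
unbounded as `t → ∞`. -/
theorem stmt_6 (k : ℤ × ℤ) (hk : k ≠ 0) (ε : ℝ) (hε : ε ≠ 0)
    (H : (ℝ × ℝ) → (ℝ × ℝ) → ℝ)
    (hH : ∀ θ R : ℝ × ℝ,
      H θ R = ((k.1 : ℝ) * R.1 + (k.2 : ℝ) * R.2)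
        + ε * Real.cos (θ.1 * (-(k.2 : ℝ)) + θ.2 * (k.1 : ℝ)))
    (θ₀ : ℝ × ℝ) (hθ₀ : Real.sin (θ₀.1 * (-(k.2 : ℝ)) + θ₀.2 * (k.1 : ℝ)) = 1)
    (R₀ : ℝ × ℝ)
    (Θ Rf : ℝ → ℝ × ℝ)
    (hΘ : ∀ t, Θ t = (θ₀.1 + t * (k.1 : ℝ), θ₀.2 + t * (k.2 : ℝ)))
    (hR : ∀ t, Rf t = (R₀.1 + t * ε * (-(k.2 : ℝ)), R₀.2 + t * ε * (k.1 : ℝ))) :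
    (∀ t : ℝ,
      deriv (fun s => (Θ s).1) t = deriv (fun r => H (Θ t) (r, (Rf t).2)) ((Rf t).1) ∧
      deriv (fun s => (Θ s).2) t = deriv (fun r => H (Θ t) ((Rf t).1, r)) ((Rf t).2) ∧
      deriv (fun s => (Rf s).1) t = - deriv (fun a => H (a, (Θ t).2) (Rf t)) ((Θ t).1) ∧
      deriv (fun s => (Rf s).2) t = - deriv (fun a => H ((Θ t).1, a) (Rf t)) ((Θ t).2)) ∧
    (∀ A : ℝ, ∃ t : ℝ, A < ‖Rf t‖) := by
  obtain rfl : H = resonantHamiltonian k.1 k.2 ε := funext₂ hH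
  have hsin : ∀ t, sin ((Θ t).1 * -k.2 + (Θ t).2 * k.1) = 1 := fun t => by
    rw [hΘ, pairing_perp_add_mul_self, hθ₀]
  refine ⟨fun t => ⟨?_, ?_, ?_, ?_⟩, fun A => ?_⟩
  · rw [deriv_resonantHamiltonian_action_fst]
    simp [hΘ]
  · rw [deriv_resonantHamiltonian_action_snd]
    simp [hΘ]
  · rw [deriv_resonantHamiltonian_angle_fst, hsin]
    simp [hR]
  · rw [deriv_resonantHamiltonian_angle_snd, hsin]
    simp [hR]
  · obtain ⟨t, ht⟩ := exists_lt_norm_add_smul R₀ (smul_ne_zero hε (perp_ne_zero hk)) A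
    refine ⟨t, ht.trans_eq (congrArg norm ?_)⟩
    ext <;> simp [hR] <;> ring
end

section
/- Let H : 𝕋² × ℝ² → ℝ be a C¹ Hamiltonian of the form H(θ,R) = h(R) + ε cos(⟨θ,k^⊥⟩) where h is C¹, k ∈ ℤ² ∖ {0}, and Λ = R₀ + span(k^⊥) is a line such that ∇h(R) ∈ span(k) for all R ∈ Λ. If θ₀ satisfies sin(⟨θ₀,k^⊥⟩) = 1, then the solution z(t) = (z_θ(t), z_R(t)) of the Hamiltonian system with initial condition (θ₀, R₀) satisfies z_R(t) = R₀ + t ε k^⊥ for all t in its interval of definition. -/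
open Real Set

/-! The action moves along `k⊥` only, so `⟨z_R - R₀, k⟩ = 0` and `z_R` stays on `Λ`. There
`∇h ∥ k`, so the angle `⟨z_θ, k⊥⟩` is conserved and `sin ⟨z_θ, k⊥⟩ = 1` for all times; the
action equation then has the constant right-hand side `ε k⊥`. -/

theorem Set.OrdConnected.eqOn_of_hasDerivAt {E : Type*} [NormedAddCommGroup E] [NormedSpace ℝ E]
    {I : Set ℝ} (hI : I.OrdConnected) {f g f' : ℝ → E}
    (hf : ∀ t ∈ I, HasDerivAt f (f' t) t) (hg : ∀ t ∈ I, HasDerivAt g (f' t) t)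
    {t₀ : ℝ} (ht₀ : t₀ ∈ I) (hfg : f t₀ = g t₀) : EqOn f g I := by
  intro t ht
  have hderiv : ∀ s ∈ I, HasDerivWithinAt (f - g) 0 I s := fun s hs =>
    (sub_self (f' s) ▸ (hf s hs).sub (hg s hs)).hasDerivWithinAt
  have := hI.convex.norm_image_sub_le_of_norm_hasDerivWithin_le (C := 0) hderiv (by simp) ht₀ ht
  simpa [hfg, sub_eq_zero] using this

theorem Set.OrdConnected.eq_of_hasDerivAt_zero {E : Type*} [NormedAddCommGroup E]
    [NormedSpace ℝ E] {I : Set ℝ} (hI : I.OrdConnected) {f : ℝ → E}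
    (hf : ∀ t ∈ I, HasDerivAt f 0 t) {t₀ t : ℝ} (ht₀ : t₀ ∈ I) (ht : t ∈ I) : f t = f t₀ :=
  hI.eqOn_of_hasDerivAt (g := fun _ => f t₀) hf (fun _ _ => hasDerivAt_const _ _) ht₀ rfl ht

theorem exists_eq_smul_perp_of_dot_eq_zero {a b : ℝ} (hab : (a, b) ≠ 0) {u : ℝ × ℝ}
    (hu : u.1 * a + u.2 * b = 0) : ∃ s : ℝ, u = (s * -b, s * a) := by
  have hnorm : a ^ 2 + b ^ 2 ≠ 0 := by
    intro h
    exact hab (Prod.ext (show a = 0 by nlinarith) (show b = 0 by nlinarith))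
  refine ⟨(u.2 * a - u.1 * b) / (a ^ 2 + b ^ 2), Prod.ext ?_ ?_⟩
  · field_simp
    linear_combination a * hu
  · field_simp
    linear_combination b * hu

theorem Set.OrdConnected.exists_eq_add_smul_perp_of_hasDerivAt {a b : ℝ} (hab : (a, b) ≠ 0)
    {I : Set ℝ} (hI : I.OrdConnected) {z : ℝ → ℝ × ℝ} {φ : ℝ → ℝ}
    (hz₁ : ∀ t ∈ I, HasDerivAt (fun s => (z s).1) (φ t * -b) t)
    (hz₂ : ∀ t ∈ I, HasDerivAt (fun s => (z s).2) (φ t * a) t) {t₀ t : ℝ} (ht₀ : t₀ ∈ I)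
    (ht : t ∈ I) : ∃ s : ℝ, z t = ((z t₀).1 + s * -b, (z t₀).2 + s * a) := by
  have hdot : ((z t).1 - (z t₀).1) * a + ((z t).2 - (z t₀).2) * b = 0 := by
    refine (hI.eq_of_hasDerivAt_zero (f := fun t => ((z t).1 - (z t₀).1) * a +
      ((z t).2 - (z t₀).2) * b) (fun s hs => ?_) ht₀ ht).trans (by simp)
    exact ((((hz₁ s hs).sub_const _).mul_const a).add
      (((hz₂ s hs).sub_const _).mul_const b)).congr_deriv (by ring)
  obtain ⟨s, hs⟩ := exists_eq_smul_perp_of_dot_eq_zero hab (u := z t - z t₀) hdot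
  exact ⟨s, by rw [← sub_add_cancel (z t) (z t₀), hs]; ext <;> simp [add_comm]⟩

theorem stmt_7_general (h : ℝ × ℝ → ℝ)
    (k : ℤ × ℤ) (hk : k ≠ 0) (ε : ℝ)
    (θ₀ R₀ : ℝ × ℝ)
    (hgrad : ∀ R : ℝ × ℝ, (∃ s : ℝ, R = (R₀.1 + s * (-(k.2 : ℝ)), R₀.2 + s * (k.1 : ℝ))) →
      ∃ c : ℝ, deriv (fun r => h (r, R.2)) R.1 = c * (k.1 : ℝ) ∧
               deriv (fun r => h (R.1, r)) R.2 = c * (k.2 : ℝ))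
    (hθ₀ : Real.sin (θ₀.1 * (-(k.2 : ℝ)) + θ₀.2 * (k.1 : ℝ)) = 1)
    (I : Set ℝ) (hI : I.OrdConnected) (h0I : (0 : ℝ) ∈ I)
    (zθ zR : ℝ → ℝ × ℝ)
    (hinit : zθ 0 = θ₀ ∧ zR 0 = R₀)
    -- the Hamiltonian equations `θ̇ = ∂_R H = ∇h(R)`,
    -- `Ṙ = -∂_θ H = ε sin(⟨θ,k⊥⟩) k⊥` along the solution:
    (hode : ∀ t ∈ I,
      HasDerivAt (fun s => (zθ s).1) (deriv (fun r => h (r, (zR t).2)) ((zR t).1)) t ∧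
      HasDerivAt (fun s => (zθ s).2) (deriv (fun r => h ((zR t).1, r)) ((zR t).2)) t ∧
      HasDerivAt (fun s => (zR s).1)
        (ε * Real.sin ((zθ t).1 * (-(k.2 : ℝ)) + (zθ t).2 * (k.1 : ℝ)) * (-(k.2 : ℝ))) t ∧
      HasDerivAt (fun s => (zR s).2)
        (ε * Real.sin ((zθ t).1 * (-(k.2 : ℝ)) + (zθ t).2 * (k.1 : ℝ)) * (k.1 : ℝ)) t) :
    ∀ t ∈ I, zR t = (R₀.1 + t * ε * (-(k.2 : ℝ)), R₀.2 + t * ε * (k.1 : ℝ)) := by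
  set a : ℝ := (k.1 : ℝ)
  set b : ℝ := (k.2 : ℝ)
  obtain ⟨hθinit, hRinit⟩ := hinit
  have hab : (a, b) ≠ 0 := fun h0 => hk (Prod.ext (Int.cast_eq_zero.mp (congrArg Prod.fst h0))
    (Int.cast_eq_zero.mp (congrArg Prod.snd h0)))
  have hline : ∀ t ∈ I, ∃ s : ℝ, zR t = (R₀.1 + s * -b, R₀.2 + s * a) := fun t ht =>
    hRinit ▸ hI.exists_eq_add_smul_perp_of_hasDerivAt hab (fun s hs => (hode s hs).2.2.1)
      (fun s hs => (hode s hs).2.2.2) h0I ht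
  have hsin : ∀ t ∈ I, Real.sin ((zθ t).1 * -b + (zθ t).2 * a) = 1 := by
    have hangle : ∀ t ∈ I, (zθ t).1 * -b + (zθ t).2 * a = θ₀.1 * -b + θ₀.2 * a := by
      refine fun t ht => (hI.eq_of_hasDerivAt_zero (f := fun t => (zθ t).1 * -b + (zθ t).2 * a)
        (fun s hs => ?_) h0I ht).trans (by simp [hθinit])
      obtain ⟨c, hc₁, hc₂⟩ := hgrad (zR s) (hline s hs)
      obtain ⟨hθ₁, hθ₂, -, -⟩ := hode s hs
      rw [hc₁] at hθ₁
      rw [hc₂] at hθ₂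
      exact ((hθ₁.mul_const (-b)).add (hθ₂.mul_const a)).congr_deriv (by ring)
    exact fun t ht => (hangle t ht).symm ▸ hθ₀
  refine hI.eqOn_of_hasDerivAt (f' := fun _ => (ε * -b, ε * a)) (fun s hs => ?_) (fun s _ => ?_)
    h0I (by simp [hRinit])
  · obtain ⟨-, -, hR₁, hR₂⟩ := hode s hs
    rw [hsin s hs, mul_one] at hR₁ hR₂
    exact hR₁.prodMk hR₂
  · exact (((hasDerivAt_id s).mul_const ε).mul_const (-b)).const_add R₀.1 |>.prodMk
      ((((hasDerivAt_id s).mul_const ε).mul_const a).const_add R₀.2) |>.congr_deriv (by simp)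

/-- for `H(θ,R) = h(R) + ε cos(⟨θ,k⊥⟩)`, if `∇h(R) ∈ span(k)` for every `R` on
the line `Λ = R₀ + span(k⊥)` and `sin(⟨θ₀,k⊥⟩) = 1`, then the solution with initial
condition `(θ₀,R₀)` has action component `z_R(t) = R₀ + t ε k⊥` on its interval of
definition. -/
theorem stmt_7 (h : ℝ × ℝ → ℝ) (hC1 : ContDiff ℝ 1 h)
    (k : ℤ × ℤ) (hk : k ≠ 0) (ε : ℝ)
    (θ₀ R₀ : ℝ × ℝ)
    (hgrad : ∀ R : ℝ × ℝ, (∃ s : ℝ, R = (R₀.1 + s * (-(k.2 : ℝ)), R₀.2 + s * (k.1 : ℝ))) →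
      ∃ c : ℝ, deriv (fun r => h (r, R.2)) R.1 = c * (k.1 : ℝ) ∧
               deriv (fun r => h (R.1, r)) R.2 = c * (k.2 : ℝ))
    (hθ₀ : Real.sin (θ₀.1 * (-(k.2 : ℝ)) + θ₀.2 * (k.1 : ℝ)) = 1)
    (I : Set ℝ) (hI : I.OrdConnected) (h0I : (0 : ℝ) ∈ I)
    (zθ zR : ℝ → ℝ × ℝ)
    (hinit : zθ 0 = θ₀ ∧ zR 0 = R₀)
    -- the Hamiltonian equations `θ̇ = ∂_R H = ∇h(R)`,
    -- `Ṙ = -∂_θ H = ε sin(⟨θ,k⊥⟩) k⊥` along the solution: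
    (hode : ∀ t ∈ I,
      HasDerivAt (fun s => (zθ s).1) (deriv (fun r => h (r, (zR t).2)) ((zR t).1)) t ∧
      HasDerivAt (fun s => (zθ s).2) (deriv (fun r => h ((zR t).1, r)) ((zR t).2)) t ∧
      HasDerivAt (fun s => (zR s).1)
        (ε * Real.sin ((zθ t).1 * (-(k.2 : ℝ)) + (zθ t).2 * (k.1 : ℝ)) * (-(k.2 : ℝ))) t ∧
      HasDerivAt (fun s => (zR s).2)
        (ε * Real.sin ((zθ t).1 * (-(k.2 : ℝ)) + (zθ t).2 * (k.1 : ℝ)) * (k.1 : ℝ)) t) :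
    ∀ t ∈ I, zR t = (R₀.1 + t * ε * (-(k.2 : ℝ)), R₀.2 + t * ε * (k.1 : ℝ)) :=
  stmt_7_general h k hk ε θ₀ R₀ hgrad hθ₀ I hI h0I zθ zR hinit hode
end

section
/- Let ψ : J → ℝ be C¹ on an interval J containing 0 with ψ'(0) = 2ρ > 0. Then there exist t₀ > 0, a strictly decreasing sequence (y_n) of positive reals with 2y_{n+1} ≤ y_n and y_n → 0, and a sequence (k_n) ⊂ ℤ² ∖ {0}, and a constant C > 0, such that for all large n: y_n ∈ [1/(2^{2n}ρ), 1/(2^{2n-1}ρ)], |k_n|_max ≤ C/y_n, and the angle ψ(y_n) is the angle of the vector k_n with the x-axis (i.e. tan(ψ(y_n)) = k_n,2/k_n,1 when k_n,1 ≠ 0). -/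
open Real Set Filter Topology

/-! Near `0` the angle `ψ` increases with slope at least `ρ`, hence so does `tan ∘ ψ`, whose
derivative is `ψ' / cos² ψ ≥ ψ'`. On `[1/(4ⁿρ), 2/(4ⁿρ)]` it therefore increases by at least
`4⁻ⁿ` and, by the intermediate value theorem, takes a value `p / 4ⁿ`; since `tan ψ` is bounded
near `0`, `|p| = O(4ⁿ)`, and `(4ⁿ, p)` is the required vector. If `ψ 0` is a pole of `tan`, the
same argument is run with `ψ - π/2`, which turns the slope `p / q` of the rotated vector into
`-q / p`. -/

lemma exists_eq_int_div_of_le_deriv {T T' : ℝ → ℝ} {a b ρ : ℝ} {q : ℕ} (hq : 0 < q)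
    (hab : a ≤ b) (hgap : 1 ≤ q * ρ * (b - a))
    (hT : ∀ x ∈ Icc a b, HasDerivAt T (T' x) x) (hT' : ∀ x ∈ Icc a b, ρ ≤ T' x) :
    ∃ y ∈ Icc a b, ∃ p : ℤ, T y = p / q ∧ |(p : ℝ)| ≤ |T a| * q + 1 := by
  have hq' : (0 : ℝ) < q := Nat.cast_pos.2 hq
  have hcont : ContinuousOn T (Icc a b) := fun x hx => (hT x hx).continuousAt.continuousWithinAt
  have hgrowth : ρ * (b - a) ≤ T b - T a := by
    refine (convex_Icc a b).mul_sub_le_image_sub_of_le_deriv hcont (fun x hx => ?_) (fun x hx => ?_)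
      a (left_mem_Icc.2 hab) b (right_mem_Icc.2 hab) hab <;>
      rw [interior_Icc] at hx
    · exact (hT x (Ioo_subset_Icc_self hx)).differentiableAt.differentiableWithinAt
    · rw [(hT x (Ioo_subset_Icc_self hx)).deriv]
      exact hT' x (Ioo_subset_Icc_self hx)
  set p : ℤ := ⌈T a * q⌉
  have hp_ge : T a * q ≤ p := Int.le_ceil _
  have hp_lt : (p : ℝ) < T a * q + 1 := Int.ceil_lt_add_one _
  have hmem : (p : ℝ) / q ∈ Icc (T a) (T b) := by
    rw [mem_Icc, le_div_iff₀ hq', div_le_iff₀ hq']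
    constructor <;> nlinarith
  obtain ⟨y, hy, hTy⟩ := intermediate_value_Icc hab hcont hmem
  refine ⟨y, hy, p, hTy, abs_le.2 ⟨?_, ?_⟩⟩ <;>
    nlinarith [le_abs_self (T a), neg_abs_le (T a)]

lemma le_one_div_cos_sq_mul {θ g' : ℝ} (hcos : cos θ ≠ 0) (hg' : 0 ≤ g') :
    g' ≤ 1 / cos θ ^ 2 * g' :=
  le_mul_of_one_le_left hg' (one_le_one_div (by positivity) (cos_sq_le_one θ))

lemma tan_add_pi_div_two (x : ℝ) : tan (x + π / 2) = -(tan x)⁻¹ := by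
  rw [show x + π / 2 = π / 2 - -x by ring, tan_pi_div_two_sub, tan_neg, inv_neg]

lemma exists_tan_comp_eq_int_div {g g' : ℝ → ℝ} {a b ρ : ℝ} {q : ℕ} (hq : 0 < q)
    (hab : a ≤ b) (hgap : 1 ≤ q * ρ * (b - a))
    (hg : ∀ x ∈ Icc a b, HasDerivAt g (g' x) x) (hg' : ∀ x ∈ Icc a b, ρ ≤ g' x)
    (hcos : ∀ x ∈ Icc a b, cos (g x) ≠ 0) :
    ∃ y ∈ Icc a b, ∃ p : ℤ, tan (g y) = p / q ∧ |(p : ℝ)| ≤ |tan (g a)| * q + 1 := by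
  have hρ : 0 ≤ ρ := by
    by_contra! hρ
    have : (q : ℝ) * ρ * (b - a) ≤ 0 := mul_nonpos_of_nonpos_of_nonneg
      (mul_nonpos_of_nonneg_of_nonpos q.cast_nonneg hρ.le) (sub_nonneg.2 hab)
    linarith
  exact exists_eq_int_div_of_le_deriv hq hab hgap
    (fun x hx => (hasDerivAt_tan (hcos x hx)).comp x (hg x hx))
    (fun x hx => (hg' x hx).trans (le_one_div_cos_sq_mul (hcos x hx) (hρ.trans (hg' x hx))))

lemma exists_int_vec_of_tan_sub_eq {x c : ℝ} (hc : c = 0 ∨ c = π / 2) {p : ℤ} {q : ℕ}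
    (hq : 0 < q) (h : tan (x - c) = p / q) :
    ∃ k : ℤ × ℤ, k ≠ 0 ∧ max |k.1| |k.2| ≤ |p| + q ∧ tan x * k.1 = k.2 := by
  have hq' : (q : ℝ) ≠ 0 := Nat.cast_ne_zero.2 hq.ne'
  have hp := abs_nonneg p
  rcases hc with rfl | rfl
  · refine ⟨(q, p), by simp [hq.ne'], max_le (by simp) (by linarith), ?_⟩
    rw [sub_zero] at h
    simp [h, hq']
  · have ht : tan x = -(p / q : ℝ)⁻¹ := by rw [← sub_add_cancel x (π / 2), tan_add_pi_div_two, h]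
    by_cases hp0 : p = 0
    -- a vertical direction: Lean's junk value `tan (π / 2) = 0` forces `k = (1, 0)`
    · refine ⟨(1, 0), by simp, max_le (by simp; omega) (by simp; omega), ?_⟩
      simp [ht, hp0]
    · refine ⟨(p, -q), by simp [hp0], max_le (by linarith [le_abs_self p]) (by simp), ?_⟩
      have : (p : ℝ) ≠ 0 := Int.cast_ne_zero.2 hp0
      rw [ht]
      field_simp
      push_cast
      ring

lemma exists_cos_sub_ne_zero (θ : ℝ) : ∃ c, (c = 0 ∨ c = π / 2) ∧ cos (θ - c) ≠ 0 := by
  by_cases h : cos θ = 0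
  · refine ⟨π / 2, Or.inr rfl, ?_⟩
    rw [cos_sub_pi_div_two]
    intro hs
    nlinarith [sin_sq_add_cos_sq θ]
  · exact ⟨0, Or.inl rfl, by rwa [sub_zero]⟩

lemma eventually_cos_ne_zero_and_abs_tan_lt {g : ℝ → ℝ} {x₀ : ℝ} (hg : ContinuousAt g x₀)
    (hcos : cos (g x₀) ≠ 0) :
    ∀ᶠ x in 𝓝 x₀, cos (g x) ≠ 0 ∧ |tan (g x)| < |tan (g x₀)| + 1 := by
  have htan : ContinuousAt (fun x => |tan (g x)|) x₀ :=
    ((continuousAt_tan.2 hcos).comp hg).abs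
  exact ((continuous_cos.continuousAt.comp hg).eventually_ne hcos).and
    (htan.eventually (gt_mem_nhds (lt_add_one _)))

lemma exists_tan_mul_eq_int_vec {ψ ψ' : ℝ → ℝ} {a b c ρ M : ℝ} {q : ℕ}
    (hc : c = 0 ∨ c = π / 2) (hq : 0 < q) (hab : a ≤ b) (hgap : 1 ≤ q * ρ * (b - a))
    (hψ : ∀ x ∈ Icc a b, HasDerivAt ψ (ψ' x) x) (hψ' : ∀ x ∈ Icc a b, ρ ≤ ψ' x)
    (hcos : ∀ x ∈ Icc a b, cos (ψ x - c) ≠ 0) (hM : |tan (ψ a - c)| ≤ M) :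
    ∃ y ∈ Icc a b, ∃ k : ℤ × ℤ, k ≠ 0 ∧ (max |k.1| |k.2| : ℤ) ≤ (M + 2) * q ∧
      tan (ψ y) * k.1 = k.2 := by
  obtain ⟨y, hy, p, hp, hpM⟩ := exists_tan_comp_eq_int_div hq hab hgap
    (fun x hx => (hψ x hx).sub_const c) hψ' hcos
  obtain ⟨k, hk0, hkp, hk⟩ := exists_int_vec_of_tan_sub_eq hc hq hp
  refine ⟨y, hy, k, hk0, ?_, hk⟩
  have hq1 : (1 : ℝ) ≤ q := Nat.one_le_cast.2 hq
  have hkp' : ((max |k.1| |k.2| : ℤ) : ℝ) ≤ |(p : ℝ)| + q := by exact_mod_cast hkp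
  nlinarith [abs_nonneg (tan (ψ a - c))]

lemma exists_local_tan_control {J : Set ℝ} {ψ : ℝ → ℝ} {ρ : ℝ} (hJ : IsOpen J) (h0J : 0 ∈ J)
    (hψ : ContDiffOn ℝ 1 ψ J) (hρ : ρ < deriv ψ 0) :
    ∃ c M ε : ℝ, (c = 0 ∨ c = π / 2) ∧ 0 < ε ∧ ∀ x ∈ Ioo (-ε) ε, HasDerivAt ψ (deriv ψ x) x ∧
      ρ ≤ deriv ψ x ∧ cos (ψ x - c) ≠ 0 ∧ |tan (ψ x - c)| ≤ M := by
  obtain ⟨c, hc, hcos⟩ := exists_cos_sub_ne_zero (ψ 0)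
  have hderiv : ∀ x ∈ J, HasDerivAt ψ (deriv ψ x) x := fun x hx =>
    ((hψ.differentiableOn one_ne_zero).differentiableAt (hJ.mem_nhds hx)).hasDerivAt
  have hderiv_cont := (hψ.continuousOn_deriv_of_isOpen hJ le_rfl).continuousAt (hJ.mem_nhds h0J)
  have hnear := ((hJ.eventually_mem h0J).and (hderiv_cont.eventually (lt_mem_nhds hρ))).and
    (eventually_cos_ne_zero_and_abs_tan_lt ((hderiv 0 h0J).sub_const c).continuousAt hcos)
  obtain ⟨ε, hε, hball⟩ := Metric.eventually_nhds_iff.1 hnear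
  refine ⟨c, |tan (ψ 0 - c)| + 1, ε, hc, hε, fun x hx => ?_⟩
  obtain ⟨⟨hxJ, hx⟩, hxc, hxM⟩ := hball (by rwa [Real.dist_eq, sub_zero, abs_lt])
  exact ⟨hderiv x hxJ, hx.le, hxc, hxM.le⟩

lemma one_div_two_pow_two_mul_le_one_div_two_pow_two_mul_sub_one {ρ : ℝ} (hρ : 0 < ρ) (n : ℕ) :
    1 / (2 ^ (2 * n) * ρ) ≤ 1 / (2 ^ (2 * n - 1) * ρ) :=
  one_div_le_one_div_of_le (by positivity) (by gcongr; exacts [one_le_two, Nat.sub_le _ _])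

lemma one_div_two_pow_two_mul_sub_one {ρ : ℝ} {n : ℕ} (hn : 1 ≤ n) :
    1 / (2 ^ (2 * n - 1) * ρ) = 2 * (1 / (2 ^ (2 * n) * ρ)) := by
  obtain ⟨m, rfl⟩ := Nat.exists_eq_add_of_le' hn
  rw [show 2 * (m + 1) - 1 = 2 * m + 1 by omega, show 2 * (m + 1) = 2 * m + 1 + 1 by omega]
  ring

lemma two_mul_one_div_two_pow_two_mul_succ_sub_one (ρ : ℝ) (n : ℕ) :
    2 * (1 / (2 ^ (2 * (n + 1) - 1) * ρ)) = 1 / (2 ^ (2 * n) * ρ) := by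
  rw [show 2 * (n + 1) - 1 = 2 * n + 1 by omega, pow_succ]
  field_simp

lemma tendsto_one_div_two_pow_two_mul_sub_one {ρ : ℝ} (hρ : 0 < ρ) :
    Tendsto (fun n : ℕ => 1 / (2 ^ (2 * n - 1) * ρ)) atTop (𝓝 0) := by
  have hexp : Tendsto (fun n : ℕ => 2 * n - 1) atTop atTop :=
    tendsto_atTop_atTop.2 fun b => ⟨b + 1, fun n hn => by omega⟩
  have hden : Tendsto (fun n : ℕ => (2 : ℝ) ^ (2 * n - 1) * ρ) atTop atTop :=
    ((tendsto_pow_atTop_atTop_of_one_lt one_lt_two).comp hexp).atTop_mul_const hρ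
  simpa only [one_div, Function.comp_def] using tendsto_inv_atTop_zero.comp hden

lemma exists_dyadic_tan_mul_eq_int_vec {ψ ψ' : ℝ → ℝ} {c ρ M ε : ℝ} {n : ℕ}
    (hc : c = 0 ∨ c = π / 2) (hρ : 0 < ρ) (hn : 1 ≤ n) (hnε : 1 / (2 ^ (2 * n - 1) * ρ) < ε)
    (hloc : ∀ x ∈ Ioo (-ε) ε, HasDerivAt ψ (ψ' x) x ∧ ρ ≤ ψ' x ∧ cos (ψ x - c) ≠ 0 ∧
      |tan (ψ x - c)| ≤ M) :
    ∃ y ∈ Icc (1 / (2 ^ (2 * n) * ρ)) (1 / (2 ^ (2 * n - 1) * ρ)), y ∈ Ioo (-ε) ε ∧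
      ∃ k : ℤ × ℤ, k ≠ 0 ∧ (max |k.1| |k.2| : ℤ) ≤ 2 * (M + 2) / ρ / y ∧
        tan (ψ y) * k.1 = k.2 := by
  set a : ℝ := 1 / (2 ^ (2 * n) * ρ)
  have ha : 0 < a := by positivity
  have hb : 1 / (2 ^ (2 * n - 1) * ρ) = 2 * a := one_div_two_pow_two_mul_sub_one hn
  have hqa : (2 : ℝ) ^ (2 * n) * ρ * a = 1 := by simp only [a]; field_simp
  rw [hb] at hnε ⊢
  have hsub : Icc a (2 * a) ⊆ Ioo (-ε) ε := fun x hx => ⟨by linarith [hx.1], by linarith [hx.2]⟩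
  have hM := (hloc a (hsub ⟨le_rfl, by linarith⟩)).2.2.2
  have hM0 : 0 ≤ M := (abs_nonneg _).trans hM
  obtain ⟨y, hy, k, hk0, hkM, hk⟩ := exists_tan_mul_eq_int_vec (q := 2 ^ (2 * n)) hc
    (by positivity) (by linarith) (by push_cast; linarith)
    (fun x hx => (hloc x (hsub hx)).1) (fun x hx => (hloc x (hsub hx)).2.1)
    (fun x hx => (hloc x (hsub hx)).2.2.1) hM
  have hy0 : 0 < y := ha.trans_le hy.1
  refine ⟨y, hy, hsub hy, k, hk0, ?_, hk⟩
  rw [Nat.cast_pow, Nat.cast_ofNat] at hkM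
  rw [le_div_iff₀ hy0]
  calc _ ≤ (M + 2) * 2 ^ (2 * n) * y := mul_le_mul_of_nonneg_right hkM hy0.le
    _ ≤ (M + 2) * 2 ^ (2 * n) * (2 * a) := by
        gcongr
        exact hy.2
    _ = 2 * (M + 2) / ρ := by
        rw [eq_div_iff hρ.ne']; linear_combination 2 * (M + 2) * hqa

lemma Filter.Eventually.exists_seq_mem {ι α : Type*} {l : Filter ι} {S : ι → Set α}
    {P : ι → α → Prop} (hS : ∀ i, (S i).Nonempty) (hP : ∀ᶠ i in l, ∃ x ∈ S i, P i x) :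
    ∃ x : ι → α, (∀ i, x i ∈ S i) ∧ ∀ᶠ i in l, P i (x i) := by
  have : ∀ i, ∃ x ∈ S i, (∃ x ∈ S i, P i x) → P i x := by
    intro i
    by_cases h : ∃ x ∈ S i, P i x
    · obtain ⟨x, hx, hPx⟩ := h
      exact ⟨x, hx, fun _ => hPx⟩
    · obtain ⟨x, hx⟩ := hS i
      exact ⟨x, hx, fun h' => absurd h' h⟩
  choose x hxS hxP using this
  exact ⟨x, hxS, hP.mono hxP⟩

/-- if `ψ` is `C¹` near `0` with `ψ'(0) = 2ρ > 0`, there are `t₀ > 0`,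
a positive sequence `y_n → 0` with `2 y_{n+1} ≤ y_n`, integer vectors `k_n ≠ 0` and `C > 0`
such that for all large `n`: `y_n ∈ [1/(2^{2n}ρ), 1/(2^{2n-1}ρ)]`, `|k_n|_max ≤ C / y_n`,
and `ψ(y_n)` is the angle of `k_n` with the `x`-axis. -/
theorem stmt_8 (J : Set ℝ) (hJ : IsOpen J) (h0J : (0 : ℝ) ∈ J)
    (ψ : ℝ → ℝ) (hψ : ContDiffOn ℝ 1 ψ J)
    (ρ : ℝ) (hρ : 0 < ρ) (hψ' : deriv ψ 0 = 2 * ρ) :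
    ∃ t₀ : ℝ, 0 < t₀ ∧
    ∃ y : ℕ → ℝ, ∃ kk : ℕ → ℤ × ℤ, ∃ C : ℝ, 0 < C ∧
      (∀ n, 0 < y n) ∧ (∀ n, 2 * y (n + 1) ≤ y n) ∧
      Tendsto y atTop (nhds 0) ∧
      ∃ N : ℕ, ∀ n ≥ N,
        y n ∈ Set.Icc (1 / (2 ^ (2 * n) * ρ)) (1 / (2 ^ (2 * n - 1) * ρ)) ∧
        y n ∈ Set.Ioo (-t₀) t₀ ∧
        kk n ≠ 0 ∧
        (max |(kk n).1| |(kk n).2| : ℤ) ≤ C / y n ∧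
        Real.tan (ψ (y n)) * ((kk n).1 : ℝ) = ((kk n).2 : ℝ) := by
  obtain ⟨c, M, ε, hc, hε, hloc⟩ :=
    exists_local_tan_control hJ h0J hψ (show ρ < deriv ψ 0 by linarith)
  have hM : 0 ≤ M := (abs_nonneg _).trans (hloc 0 ⟨neg_lt_zero.2 hε, hε⟩).2.2.2
  set A : ℕ → ℝ := fun n => 1 / (2 ^ (2 * n) * ρ)
  set B : ℕ → ℝ := fun n => 1 / (2 ^ (2 * n - 1) * ρ)
  have hgood : ∀ᶠ n in atTop, ∃ z ∈ Icc (A n) (B n) ×ˢ (univ : Set (ℤ × ℤ)),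
      z.1 ∈ Ioo (-ε) ε ∧ z.2 ≠ 0 ∧ (max |z.2.1| |z.2.2| : ℤ) ≤ 2 * (M + 2) / ρ / z.1 ∧
      tan (ψ z.1) * z.2.1 = z.2.2 := by
    filter_upwards [(tendsto_one_div_two_pow_two_mul_sub_one hρ).eventually (gt_mem_nhds hε),
      eventually_ge_atTop 1] with n hnε hn
    obtain ⟨y, hy, hyε, k, hk⟩ := exists_dyadic_tan_mul_eq_int_vec hc hρ hn hnε hloc
    exact ⟨(y, k), ⟨hy, trivial⟩, hyε, hk⟩
  obtain ⟨z, hzS, hz⟩ := hgood.exists_seq_mem (S := fun n => Icc (A n) (B n) ×ˢ univ) fun n =>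
    ⟨(A n, 0), left_mem_Icc.2 (one_div_two_pow_two_mul_le_one_div_two_pow_two_mul_sub_one hρ n),
      trivial⟩
  have hz0 : ∀ n, 0 < (z n).1 := fun n => lt_of_lt_of_le (by positivity) (hzS n).1.1
  refine ⟨ε, hε, fun n => (z n).1, fun n => (z n).2, 2 * (M + 2) / ρ, by positivity, hz0,
    fun n => ?_, squeeze_zero (fun n => (hz0 n).le) (fun n => (hzS n).1.2)
      (tendsto_one_div_two_pow_two_mul_sub_one hρ), ?_⟩
  · calc 2 * (z (n + 1)).1 ≤ 2 * B (n + 1) := by linarith [(hzS (n + 1)).1.2]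
      _ = A n := two_mul_one_div_two_pow_two_mul_succ_sub_one ρ n
      _ ≤ (z n).1 := (hzS n).1.1
  · obtain ⟨N, hN⟩ := eventually_atTop.1 hz
    exact ⟨N, fun n hn => ⟨(hzS n).1, hN n hn⟩⟩
end

section
/- Let v : J → ℝ² be analytic with v₂ nonvanishing, and suppose h is the integrable Hamiltonian constructed so that ∇h(0,y) = v(y), with second derivatives at 0 given by ∂²_{yy}h(0) = v₂'(0), ∂²_{xy}h(0) = v₁'(0), and ∂²_{xx}h(0) = v₂'(0)φ(0)² + 2v₂(0)φ(0)φ'(0), where φ = v₁/v₂. Then det(∂²h(0)) = (v₂'(0)φ(0))² + 2v₂(0)v₂'(0)φ(0)φ'(0) − (v₁'(0))². In particular: (a) if v₁(0)=0 and v₁'(0)≠0 then det(∂²h(0)) = −(v₁'(0))² ≠ 0; (b) if v₁(0)v₂'(0) ≠ 0 and v₁'(0)=0, then φ'(0) = −φ(0)v₂'(0)/v₂(0) and det(∂²h(0)) = −(v₂'(0)φ(0))² ≠ 0. -/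
/-- the Hessian determinant of the constructed integrable Hamiltonian at the
origin equals `(v₂'(0)φ(0))² + 2v₂(0)v₂'(0)φ(0)φ'(0) − (v₁'(0))²`, and is nonzero under
either Kolmogorov non-degeneracy condition (a) `v₁(0)=0, v₁'(0)≠0` or
(b) `v₁(0)v₂'(0)≠0, v₁'(0)=0`. -/
theorem stmt_14 (v₁ v₂ v₁' v₂' φ φ' h11 h12 h22 : ℝ)
    (hv₂ : v₂ ≠ 0)
    (hφ : φ = v₁ / v₂)
    (hφ' : φ' = (v₁' * v₂ - v₁ * v₂') / v₂ ^ 2)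
    (hh22 : h22 = v₂') (hh12 : h12 = v₁')
    (hh11 : h11 = v₂' * φ ^ 2 + 2 * v₂ * φ * φ') :
    h11 * h22 - h12 ^ 2 = (v₂' * φ) ^ 2 + 2 * v₂ * v₂' * φ * φ' - v₁' ^ 2 ∧
    (v₁ = 0 → v₁' ≠ 0 →
      h11 * h22 - h12 ^ 2 = -(v₁' ^ 2) ∧ h11 * h22 - h12 ^ 2 ≠ 0) ∧
    (v₁ * v₂' ≠ 0 → v₁' = 0 →
      φ' = -(φ * v₂' / v₂) ∧
      h11 * h22 - h12 ^ 2 = -((v₂' * φ) ^ 2) ∧ h11 * h22 - h12 ^ 2 ≠ 0) := by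
  rw [hh22, hh12, hh11]
  subst hφ hφ'
  refine ⟨by ring, ?_, ?_⟩
  · rintro rfl h1
    constructor
    · field_simp; ring
    · simp only [ne_eq]
      field_simp
      intro h
      have h' : v₂ ^ 2 * v₁' ^ 2 = 0 := by linear_combination -h
      exact mul_ne_zero (pow_ne_zero 2 hv₂) (pow_ne_zero 2 h1) h'
  · intro hvv h0
    have hv1 : v₁ ≠ 0 := fun h => hvv (by simp [h])
    have hv2' : v₂' ≠ 0 := fun h => hvv (by simp [h])
    rw [h0]
    refine ⟨by field_simp; ring, by field_simp; ring, ?_⟩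
    field_simp
    intro h
    have h2 : (v₂' * v₁) ^ 2 * v₂ ^ 3 = 0 := by
      rcases div_eq_zero_iff.mp h with h | h
      · linear_combination -h * v₂ ^ 3
      · exact absurd h (pow_ne_zero 2 hv₂)
    have h3 := (mul_eq_zero.mp h2).resolve_right (pow_ne_zero 3 hv₂)
    rcases mul_eq_zero.mp (pow_eq_zero_iff two_ne_zero |>.mp h3) with h' | h'
    · exact hv2' h'
    · exact hv1 h'
end
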